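/- Let v(z) = a0 · z · (z - u1)^n · (z - conj(u1))^n with a0 > 0, n ≥ 1, Im(u1) > 0 and Re(u1) > 0, and let τ = -2πi · Res(1/v, u1). Then Re(τ) < 0. -/

import Mathlib

/-!
By Cauchy's formula for derivatives and the Leibniz rule, the integral is `2πi` times the
residue of `1/v` at `u₁`, and this residue equals `-S / (a₀ (2 Im u₁)^(2n))` with
`S = ∑_{k<n} C(n-1+k, k) (1+q)^(n-k)` and `q = -ū₁/u₁`.
Hence `Re τ = -2π Im S / (a₀ (2 Im u₁)^(2n))`. Since `Re u₁ > 0`, `q` lies on the unit circle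
with `Im q > 0`. Pascal's rule gives the recurrence
`(u-1) S_{n+1}(u) = u² S_n(u) + C(2n-1, n-1) (u² - 2u)`, from which, when `q q̄ = 1`,
`S - S̄ = (q - q̄) ∑_{k<n} C(2k, k) |1+q|^(2(n-1-k))`;
so `Im S` is `Im q` times a positive number.
-/

open Finset
open scoped Nat

section NegBinomSum

variable {R : Type*} [CommRing R]

/-- `u^(m+1)` times the degree-`m` truncation of the binomial series of `(1 - u⁻¹)^(-(m+1))`. -/
def negBinomSum (m : ℕ) (u : R) : R :=
  ∑ k ∈ range (m + 1), ((m + k).choose k : R) * u ^ (m + 1 - k)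

lemma sub_one_mul_negBinomSum_succ (m : ℕ) (u : R) :
    (u - 1) * negBinomSum (m + 1) u =
      u ^ 2 * negBinomSum m u + ((2 * m + 1).choose m : R) * (u ^ 2 - 2 * u) := by
  have hlast : negBinomSum (m + 1) u
      = ∑ k ∈ range (m + 1), ((m + 1 + k).choose k : R) * u ^ (m + 2 - k)
        + ((2 * m + 1).choose m : R) * (2 * u) := by
    rw [negBinomSum, sum_range_succ, show m + 1 + (m + 1) = 2 * m + 1 + 1 by ring,
      Nat.choose_succ_succ', ← Nat.choose_symm_half, show m + 1 + 1 - (m + 1) = 1 by omega]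
    push_cast; ring
  have hpascal : u * negBinomSum (m + 1) u
      = u ^ (m + 3) + ∑ k ∈ range (m + 1), ((m + 1 + k).choose k : R) * u ^ (m + 2 - k)
        + ∑ k ∈ range (m + 1), ((m + 1 + k).choose (k + 1) : R) * u ^ (m + 2 - k) := by
    have hterm : ∀ k ∈ range (m + 1),
        u * (((m + 1 + (k + 1)).choose (k + 1) : R) * u ^ (m + 1 + 1 - (k + 1)))
          = ((m + 1 + k).choose k : R) * u ^ (m + 2 - k)
            + ((m + 1 + k).choose (k + 1) : R) * u ^ (m + 2 - k) := by
      intro k hk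
      rw [show m + 1 + (k + 1) = m + 1 + k + 1 by ring, Nat.choose_succ_succ',
        show m + 2 - k = m + 1 + 1 - (k + 1) + 1 by have := mem_range.1 hk; omega]
      push_cast; ring
    rw [negBinomSum, mul_sum, sum_range_succ', sum_congr rfl hterm, sum_add_distrib]
    simp only [Nat.choose_zero_right, Nat.cast_one, one_mul, Nat.sub_zero]
    ring
  have hshift : u ^ 2 * negBinomSum m u + ((2 * m + 1).choose m : R) * u ^ 2
      = u ^ (m + 3)
        + ∑ k ∈ range (m + 1), ((m + 1 + k).choose (k + 1) : R) * u ^ (m + 2 - k) := by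
    have hterm : ∀ k ∈ range m,
        u ^ 2 * (((m + (k + 1)).choose (k + 1) : R) * u ^ (m + 1 - (k + 1)))
          = ((m + 1 + k).choose (k + 1) : R) * u ^ (m + 2 - k) := by
      intro k hk
      rw [show m + (k + 1) = m + 1 + k by ring,
        show m + 2 - k = m + 1 - (k + 1) + 2 by have := mem_range.1 hk; omega]
      ring
    rw [negBinomSum, mul_sum, sum_range_succ', sum_congr rfl hterm, sum_range_succ,
      show m + 1 + m = 2 * m + 1 by ring, ← Nat.choose_symm_half, show m + 2 - m = 2 by omega]
    simp only [Nat.choose_zero_right, Nat.cast_one, one_mul, Nat.sub_zero]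
    ring
  linear_combination hpascal - hlast - hshift

lemma negBinomSum_zero (u : R) : negBinomSum 0 u = u := by
  simp [negBinomSum]

lemma negBinomSum_succ_one_add_of_mul_eq_one {q r : R} (hqr : q * r = 1) (m : ℕ) :
    negBinomSum (m + 1) (1 + q) =
      (1 + q) * (1 + r) * negBinomSum m (1 + q) + ((2 * m + 1).choose m : R) * (q - r) := by
  have key := sub_one_mul_negBinomSum_succ m (1 + q)
  rw [add_sub_cancel_left] at key
  linear_combination r * key - (negBinomSum (m + 1) (1 + q) - (1 + q) * negBinomSum m (1 + q)
    - ((2 * m + 1).choose m : R) * q) * hqr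

lemma negBinomSum_one_add_sub_of_mul_eq_one {q r : R} (hqr : q * r = 1) (m : ℕ) :
    negBinomSum m (1 + q) - negBinomSum m (1 + r) =
      (q - r) * ∑ k ∈ range (m + 1), (k.centralBinom : R) * ((1 + q) * (1 + r)) ^ (m - k) := by
  induction m with
  | zero => simp [negBinomSum_zero]
  | succ m ih =>
    have hc : ((m + 1).centralBinom : R) = 2 * ((2 * m + 1).choose m : R) := by
      rw [Nat.centralBinom_eq_two_mul_choose, show 2 * (m + 1) = 2 * m + 1 + 1 by ring,
        Nat.choose_succ_succ', Nat.choose_symm_half]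
      push_cast; ring
    set P := (1 + q) * (1 + r)
    have hsum : ∑ k ∈ range (m + 1 + 1), (k.centralBinom : R) * P ^ (m + 1 - k)
        = P * ∑ k ∈ range (m + 1), (k.centralBinom : R) * P ^ (m - k)
          + ((m + 1).centralBinom : R) := by
      rw [sum_range_succ, Nat.sub_self, pow_zero, mul_one, mul_sum]
      congr 1
      refine sum_congr rfl fun k hk => ?_
      rw [show m + 1 - k = m - k + 1 by have := mem_range.1 hk; omega]
      ring
    rw [negBinomSum_succ_one_add_of_mul_eq_one hqr, negBinomSum_succ_one_add_of_mul_eq_one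
      (by rwa [mul_comm]), hsum, hc]
    linear_combination P * ih

end NegBinomSum

lemma im_negBinomSum_one_add_pos {q : ℂ} (hq : ‖q‖ = 1) (hq_im : 0 < q.im) (m : ℕ) :
    0 < (negBinomSum m (1 + q)).im := by
  have hqq : q * starRingEnd ℂ q = 1 := by
    rw [Complex.mul_conj, Complex.normSq_eq_norm_sq, hq]; norm_num
  have hconj : starRingEnd ℂ (negBinomSum m (1 + q)) = negBinomSum m (1 + starRingEnd ℂ q) := by
    simp [negBinomSum, map_sum]
  set P : ℝ := ∑ k ∈ range (m + 1), (k.centralBinom : ℝ) * Complex.normSq (1 + q) ^ (m - k)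
  have hP : 0 < P := by
    have h1q : 1 + q ≠ 0 := fun h => hq_im.ne' (by simpa using congrArg Complex.im h)
    refine sum_pos (fun k _ => mul_pos (mod_cast k.centralBinom_pos)
      (pow_pos (Complex.normSq_pos.2 h1q) _))
      ⟨0, mem_range.2 m.succ_pos⟩
  have key := negBinomSum_one_add_sub_of_mul_eq_one hqq m
  rw [← hconj, Complex.sub_conj, Complex.sub_conj] at key
  have hnormSq : (1 + q) * (1 + starRingEnd ℂ q) = (Complex.normSq (1 + q) : ℂ) := by
    rw [← Complex.mul_conj, map_add, map_one]
  have hPc : ∑ k ∈ range (m + 1),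
      (k.centralBinom : ℂ) * ((1 + q) * (1 + starRingEnd ℂ q)) ^ (m - k) = (P : ℂ) := by
    simp only [P, hnormSq]; push_cast; rfl
  rw [hPc] at key
  have him : (negBinomSum m (1 + q)).im = q.im * P := by
    simpa [mul_assoc] using congrArg Complex.im key
  rw [him]
  exact mul_pos hq_im hP

lemma iteratedDeriv_inv_sub_pow {𝕜 : Type*} [NontriviallyNormedField 𝕜] (m k : ℕ) (w z : 𝕜) :
    iteratedDeriv k (fun z => ((z - w) ^ (m + 1))⁻¹) z
      = (-1) ^ k * k ! * (m + k).choose k * ((z - w) ^ (m + 1 + k))⁻¹ := by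
  have hzpow : (fun z : 𝕜 => ((z - w) ^ (m + 1))⁻¹) = fun z => (z - w) ^ (-(m + 1 : ℤ)) := by
    ext z; rw [zpow_neg]; norm_cast
  have hprod : ∏ i ∈ range k, (Int.cast (-(m + 1 : ℤ)) - i : 𝕜)
      = (-1) ^ k * k ! * (m + k).choose k :=
    calc ∏ i ∈ range k, (Int.cast (-(m + 1 : ℤ)) - i : 𝕜)
        = ∏ i ∈ range k, (-1 * ((m + 1 + i : ℕ) : 𝕜)) :=
          prod_congr rfl fun i _ => by push_cast; ring
      _ = (-1) ^ k * k ! * (m + k).choose k := by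
          rw [prod_mul_distrib, prod_const, card_range, ← Nat.cast_prod,
            ← Nat.ascFactorial_eq_prod_range, Nat.ascFactorial_eq_factorial_mul_choose]
          push_cast; ring
  rw [hzpow, congrFun (iteratedDeriv_comp_sub_const k (fun y : 𝕜 => y ^ (-(m + 1 : ℤ))) w),
    iteratedDeriv_eq_iterate, iter_deriv_zpow, hprod,
    show -(m + 1 : ℤ) - k = -((m + 1 + k : ℕ) : ℤ) by push_cast; ring, zpow_neg, zpow_natCast]

lemma iteratedDeriv_inv_sub_pow_mul_inv {𝕜 : Type*} [NontriviallyNormedField 𝕜] (m : ℕ)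
    {w u : 𝕜} (hu : u ≠ 0) (huw : u ≠ w) :
    iteratedDeriv m (fun z => ((z - w) ^ (m + 1))⁻¹ * z⁻¹) u
      = (-1) ^ m * m ! * negBinomSum m ((u - w) / u) / (u - w) ^ (2 * m + 2) := by
  have hδ : u - w ≠ 0 := sub_ne_zero.2 huw
  have hinv (j : ℕ) : iteratedDeriv j Inv.inv u = (-1) ^ j * j ! * (u ^ (j + 1))⁻¹ := by
    simpa [add_comm] using iteratedDeriv_inv_sub_pow 0 j 0 u
  have hf : ContDiffAt 𝕜 m (fun z : 𝕜 => ((z - w) ^ (m + 1))⁻¹) u :=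
    ((contDiffAt_id.sub contDiffAt_const).pow _).inv (pow_ne_zero _ hδ)
  rw [iteratedDeriv_fun_mul hf (contDiffAt_inv 𝕜 hu), negBinomSum, mul_sum, sum_div]
  refine sum_congr rfl fun i hi => ?_
  have hi : i ≤ m := Nat.lt_succ_iff.1 (mem_range.1 hi)
  rw [hinv, iteratedDeriv_inv_sub_pow]
  have hfact : (m.choose i : 𝕜) * i ! * (m - i) ! = m ! := by
    rw [← Nat.cast_mul, ← Nat.cast_mul, Nat.choose_mul_factorial_mul_factorial hi]
  have hsign : ((-1 : 𝕜)) ^ i * (-1) ^ (m - i) = (-1) ^ m := by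
    rw [← pow_add, Nat.add_sub_cancel' hi]
  have hpow : (u - w) ^ (m + 1 - i) * (u - w) ^ (m + 1 + i) = (u - w) ^ (2 * m + 2) := by
    rw [← pow_add]; congr 1; omega
  rw [div_pow, show m - i + 1 = m + 1 - i by omega, ← hfact, ← hsign, ← hpow]
  field_simp

open Metric Real Complex in
lemma circleIntegral_inv_mul_mul_sub_pow_mul_sub_pow {c w : ℂ} {ε : ℝ} (a : ℂ) (m : ℕ)
    (hε : 0 < ε) (h0 : (0 : ℂ) ∉ closedBall c ε) (hw : w ∉ closedBall c ε) :
    ∮ z in C(c, ε), (a * z * (z - c) ^ (m + 1) * (z - w) ^ (m + 1))⁻¹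
      = 2 * π * I * a⁻¹ * ((-1) ^ m * negBinomSum m ((c - w) / c) / (c - w) ^ (2 * m + 2)) := by
  have hc : c ≠ 0 := fun h => h0 (h ▸ mem_closedBall_self hε.le)
  have hcw : c ≠ w := fun h => hw (h ▸ mem_closedBall_self hε.le)
  have hg : DifferentiableOn ℂ (fun z => a⁻¹ * (((z - w) ^ (m + 1))⁻¹ * z⁻¹))
      (closedBall c ε) := by
    intro z hz
    have hz0 : z ≠ 0 := ne_of_mem_of_not_mem hz h0
    have hzw : (z - w) ^ (m + 1) ≠ 0 :=
      pow_ne_zero _ (sub_ne_zero.2 (ne_of_mem_of_not_mem hz hw))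
    apply DifferentiableAt.differentiableWithinAt
    fun_prop (disch := assumption)
  have key := hg.circleIntegral_one_div_sub_center_pow_smul hε m
  rw [iteratedDeriv_const_mul_field, iteratedDeriv_inv_sub_pow_mul_inv m hc hcw] at key
  convert key using 1
  · congr 1; ext z
    simp only [smul_eq_mul, mul_inv, one_div]; ring
  · have := Nat.cast_ne_zero (R := ℂ).2 m.factorial_ne_zero
    rw [smul_eq_mul]; field_simp

lemma im_pos_of_mem_closedBall {u z : ℂ} {ε : ℝ} (hε : ε < u.im)
    (hz : z ∈ Metric.closedBall u ε) : 0 < z.im := by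
  have h := (abs_le.1 ((Complex.abs_im_le_norm (z - u)).trans (mem_closedBall_iff_norm.1 hz))).1
  rw [Complex.sub_im] at h
  linarith

lemma im_negBinomSum_sub_conj_div_pos (m : ℕ) {u : ℂ} (hre : 0 < u.re) (him : 0 < u.im) :
    0 < (negBinomSum m ((u - starRingEnd ℂ u) / u)).im := by
  have hu : u ≠ 0 := fun h => by simp [h] at hre
  have hnorm : ‖-(starRingEnd ℂ u / u)‖ = 1 := by
    rw [norm_neg, norm_div, Complex.norm_conj, div_self (norm_ne_zero_iff.2 hu)]
  have hq_im : (-(starRingEnd ℂ u / u)).im = 2 * u.re * u.im / Complex.normSq u := by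
    simp only [Complex.neg_im, Complex.div_im, Complex.conj_im, Complex.conj_re, neg_mul,
      neg_sub]
    field_simp
    ring
  rw [show (u - starRingEnd ℂ u) / u = 1 + -(starRingEnd ℂ u / u) by field_simp; ring]
  exact im_negBinomSum_one_add_pos hnorm
    (by rw [hq_im]; exact div_pos (by positivity) (Complex.normSq_pos.2 hu)) m

lemma sub_conj_pow_two_mul (u : ℂ) (k : ℕ) :
    (u - starRingEnd ℂ u) ^ (2 * k) = (-1) ^ k * ((2 * u.im) ^ (2 * k) : ℝ) := by
  rw [Complex.sub_conj, mul_pow, pow_mul Complex.I, Complex.I_sq]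
  push_cast; ring

open Real in
theorem re_tau_neg (a0 : ℝ) (ha0 : 0 < a0) (n : ℕ) (hn : 1 ≤ n)
    (u1 : ℂ) (hIm : 0 < u1.im) (hRe : 0 < u1.re)
    (v : ℂ → ℂ)
    (hv : ∀ z : ℂ, v z = (a0 : ℂ) * z * (z - u1) ^ n * (z - (starRingEnd ℂ) u1) ^ n)
    (ε : ℝ) (hε : 0 < ε) (hε' : ε < u1.im)
    (τ : ℂ)
    (hτ : τ = -(2 * π * Complex.I)
        * ((2 * π * Complex.I)⁻¹ * (∮ z in C(u1, ε), (v z)⁻¹))) :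
    τ.re < 0 := by
  obtain ⟨m, rfl⟩ : ∃ m, n = m + 1 := ⟨n - 1, by omega⟩
  have hint := circleIntegral_inv_mul_mul_sub_pow_mul_sub_pow (w := starRingEnd ℂ u1) a0 m hε
    (fun h => by simpa using im_pos_of_mem_closedBall hε' h)
    (fun h => by linarith [im_pos_of_mem_closedBall hε' h, Complex.conj_im u1])
  rw [show 2 * m + 2 = 2 * (m + 1) by ring, sub_conj_pow_two_mul] at hint
  simp only [hv] at hτ
  have hK : 0 < (2 * u1.im) ^ (2 * (m + 1)) := by positivity
  have hτ' : τ = ((2 * π / (a0 * (2 * u1.im) ^ (2 * (m + 1))) : ℝ) : ℂ)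
      * (Complex.I * negBinomSum m ((u1 - starRingEnd ℂ u1) / u1)) := by
    rw [hτ, hint]
    generalize negBinomSum m ((u1 - starRingEnd ℂ u1) / u1) = S
    have := Complex.ofReal_ne_zero.2 ha0.ne'
    have := Complex.ofReal_ne_zero.2 hK.ne'
    push_cast
    field_simp
    ring
  rw [hτ', Complex.re_ofReal_mul, Complex.I_mul_re]
  exact mul_neg_of_pos_of_neg (by positivity)
    (neg_neg_of_pos (im_negBinomSum_sub_conj_div_pos m hRe hIm))
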